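/- Let α ∈ (0,1] and let m be a nonnegative integer. Then the conformable fractional Hermite polynomial H_m^α(x) = H_m(x^α) satisfies the conformable fractional Hermite equation T_α T_α y − 2α x^{α} T_α y + 2α² m y = 0 for all x > 0. -/

import Mathlib

/-! For `x > 0` the chain rule gives `T_α (g ∘ (· ^ α)) x = α g'(x ^ α)`, so applying `T_α` twice
turns the conformable Hermite equation for `H_m(x ^ α)` into `α²` times the classical Hermite
equation `H_m'' - 2 u H_m' + 2 m H_m = 0` at `u = x ^ α`, which follows from the recurrence and
`H_m' = 2 m H_{m-1}`. -/

/-- The physicists' Hermite polynomials, as real functions: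
`H₀ = 1`, `H₁ x = 2 x`, `H_{m+1} x = 2 x * H_m x - 2 m * H_{m-1} x`. -/
noncomputable def hermiteP : ℕ → ℝ → ℝ
  | 0, _ => 1
  | 1, x => 2 * x
  | (m + 2), x => 2 * x * hermiteP (m + 1) x - 2 * ((m : ℝ) + 1) * hermiteP m x

/-- At `m = 0` the truncated index `m - 1` is harmless: its coefficient vanishes. -/
lemma hermiteP_succ (m : ℕ) (u : ℝ) :
    hermiteP (m + 1) u = 2 * u * hermiteP m u - 2 * (m : ℝ) * hermiteP (m - 1) u := by
  cases m <;> simp [hermiteP]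

lemma hasDerivAt_hermiteP (m : ℕ) (u : ℝ) :
    HasDerivAt (hermiteP m) (2 * (m : ℝ) * hermiteP (m - 1) u) u := by
  induction m using Nat.twoStepInduction generalizing u with
  | zero => simpa [hermiteP] using hasDerivAt_const u (1 : ℝ)
  | one => simpa [hermiteP] using (hasDerivAt_id u).const_mul (2 : ℝ)
  | more k ih₁ ih₂ =>
    have hrec : hermiteP (k + 2) =
        fun x => 2 * x * hermiteP (k + 1) x - 2 * ((k : ℝ) + 1) * hermiteP k x := by
      funext x; rfl
    rw [hrec]
    refine ((((hasDerivAt_id u).const_mul 2).mul (ih₂ u)).sub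
      ((ih₁ u).const_mul (2 * ((k : ℝ) + 1)))).congr_deriv ?_
    rw [show k + 2 - 1 = k + 1 from rfl, Nat.add_sub_cancel, hermiteP_succ k u, id]
    push_cast
    ring

lemma deriv_hermiteP (m : ℕ) : deriv (hermiteP m) = fun u => 2 * (m : ℝ) * hermiteP (m - 1) u :=
  funext fun u => (hasDerivAt_hermiteP m u).deriv

lemma differentiable_hermiteP (m : ℕ) : Differentiable ℝ (hermiteP m) :=
  fun u => (hasDerivAt_hermiteP m u).differentiableAt

lemma hermiteP_ode (m : ℕ) (u : ℝ) :
    deriv (deriv (hermiteP m)) u - 2 * u * deriv (hermiteP m) u + 2 * m * hermiteP m u = 0 := by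
  have hd2 : deriv (deriv (hermiteP m)) u =
      2 * (m : ℝ) * (2 * ((m - 1 : ℕ) : ℝ) * hermiteP (m - 1 - 1) u) := by
    rw [deriv_hermiteP, ((hasDerivAt_hermiteP (m - 1) u).const_mul _).deriv]
  rw [hd2, deriv_hermiteP]
  cases m with
  | zero => simp
  | succ k =>
    rw [hermiteP_succ k u]
    simp only [Nat.add_sub_cancel]
    ring

noncomputable def conformableDeriv (α : ℝ) (f : ℝ → ℝ) (x : ℝ) : ℝ :=
  x ^ (1 - α) * deriv f x

section ConformableChainRule

variable {α x : ℝ} {g : ℝ → ℝ}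

/-- The factor `x ^ (1 - α)` cancels the inner derivative `α x ^ (α - 1)`. -/
lemma conformableDeriv_comp_rpow {g' : ℝ} (hx : 0 < x) (hg : HasDerivAt g g' (x ^ α)) :
    conformableDeriv α (fun t => g (t ^ α)) x = α * g' := by
  have hcomp : HasDerivAt (fun t => g (t ^ α)) (g' * (α * x ^ (α - 1))) x :=
    hg.comp x (Real.hasDerivAt_rpow_const (Or.inl hx.ne'))
  have hcancel : x ^ (1 - α) * x ^ (α - 1) = 1 := by
    rw [← Real.rpow_add hx]; norm_num
  rw [conformableDeriv, hcomp.deriv]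
  linear_combination (α * g') * hcancel

lemma conformableDeriv_conformableDeriv_comp_rpow (hg : Differentiable ℝ g)
    (hg' : Differentiable ℝ (deriv g)) (hx : 0 < x) :
    conformableDeriv α (conformableDeriv α (fun t => g (t ^ α))) x =
      α ^ 2 * deriv (deriv g) (x ^ α) := by
  have hnear : conformableDeriv α (fun t => g (t ^ α)) =ᶠ[nhds x]
      fun t => α * deriv g (t ^ α) := by
    filter_upwards [isOpen_Ioi.mem_nhds hx] with t ht
    exact conformableDeriv_comp_rpow ht (hg _).hasDerivAt
  rw [conformableDeriv, hnear.deriv_eq, ← conformableDeriv,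
    conformableDeriv_comp_rpow hx ((hg' _).hasDerivAt.const_mul α)]
  ring

end ConformableChainRule

theorem stmt_7_general (α : ℝ) (m : ℕ)
    (T : (ℝ → ℝ) → (ℝ → ℝ)) (hT : T = fun f x => x ^ (1 - α) * deriv f x)
    (y : ℝ → ℝ) (hy : y = fun x => hermiteP m (x ^ α)) :
    ∀ x : ℝ, 0 < x →
      T (T y) x - 2 * α * x ^ α * T y x + 2 * α ^ 2 * (m : ℝ) * y x = 0 := by
  intro x hx
  subst hT hy
  change conformableDeriv α (conformableDeriv α fun t => hermiteP m (t ^ α)) x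
      - 2 * α * x ^ α * conformableDeriv α (fun t => hermiteP m (t ^ α)) x
      + 2 * α ^ 2 * m * hermiteP m (x ^ α) = 0
  have hdiff' : Differentiable ℝ (deriv (hermiteP m)) := by
    rw [deriv_hermiteP]; exact (differentiable_hermiteP _).const_mul _
  rw [conformableDeriv_conformableDeriv_comp_rpow (differentiable_hermiteP m) hdiff' hx,
    conformableDeriv_comp_rpow hx (differentiable_hermiteP m _).hasDerivAt]
  linear_combination α ^ 2 * hermiteP_ode m (x ^ α)

theorem stmt_7 (α : ℝ) (hα : α ∈ Set.Ioc (0:ℝ) 1) (m : ℕ)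
    (T : (ℝ → ℝ) → (ℝ → ℝ)) (hT : T = fun f x => x ^ (1 - α) * deriv f x)
    (y : ℝ → ℝ) (hy : y = fun x => hermiteP m (x ^ α)) :
    ∀ x : ℝ, 0 < x →
      T (T y) x - 2 * α * x ^ α * T y x + 2 * α ^ 2 * (m : ℝ) * y x = 0 :=
  stmt_7_general α m T hT y hy
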